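/- Let A be a K×M real matrix, ε ~ N(0, σ² I_M), y ∈ ℝ^M fixed, and define L(x) = E[(‖A(x+ε)‖² − ‖Ay‖²)²]. Then L(x) = ‖Ax‖⁴ + 4σ²‖A^T A x‖² + 2‖Ax‖²(E[‖Aε‖²] − ‖Ay‖²) + L(0). -/

import Mathlib

open MeasureTheory Matrix

/-!
Write `Q z = ‖A z‖²` and `c = ‖A y‖²`. Since `Q (x + ε) = Q x + 2 ⟪Aᵀ A x, ε⟫ + Q ε`, the integrand
of `L x` is the square of `(Q x - c) + 2 ⟪Aᵀ A x, ε⟫ + Q ε`. Expanding, the linear term has mean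
zero, its square has mean `4 σ² ‖Aᵀ A x‖²`, and its product with `Q ε` is a combination of third
moments, hence has mean zero. This gives
`L x = (Q x - c)² + 2 (Q x - c) E[Q ε] + 4 σ² ‖Aᵀ A x‖² + E[(Q ε)²]` for every `x`, and subtracting
the case `x = 0` yields the claim. All the polynomials in `ε` of degree at most four that occur are
integrable by Hölder's inequality, because the coordinates of `ε` have finite fourth moments.
-/

lemma sum_sq_mulVec_add {m n R : Type*} [Fintype m] [Fintype n] [CommSemiring R]
    (A : Matrix m n R) (x e : n → R) :
    ∑ k, (A *ᵥ (x + e)) k ^ 2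
      = ∑ k, (A *ᵥ x) k ^ 2 + 2 * ((Aᵀ * A) *ᵥ x) ⬝ᵥ e + ∑ k, (A *ᵥ e) k ^ 2 := by
  have hcross : ((Aᵀ * A) *ᵥ x) ⬝ᵥ e = ∑ k, (A *ᵥ x) k * (A *ᵥ e) k := by
    rw [← mulVec_mulVec, mulVec_transpose, ← dotProduct_mulVec]
    rfl
  simp only [hcross, mulVec_add, Pi.add_apply, add_sq, Finset.sum_add_distrib, Finset.mul_sum,
    mul_assoc]

section DotProduct

variable {ι R : Type*} [Fintype ι] [CommSemiring R]

lemma dotProduct_mul_dotProduct (u v a : ι → R) :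
    (u ⬝ᵥ a) * (v ⬝ᵥ a) = ∑ i, ∑ j, u i * v j * (a i * a j) := by
  simp only [dotProduct, Finset.sum_mul_sum]
  exact Finset.sum_congr rfl fun i _ => Finset.sum_congr rfl fun j _ => by ring

lemma dotProduct_mul_dotProduct_mul_dotProduct (u v w a : ι → R) :
    (u ⬝ᵥ a) * (v ⬝ᵥ a) * (w ⬝ᵥ a) = ∑ i, ∑ j, ∑ k, u i * v j * w k * (a i * a j * a k) := by
  rw [dotProduct_mul_dotProduct]
  simp only [dotProduct, Finset.sum_mul]
  simp only [Finset.mul_sum]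
  exact Finset.sum_congr rfl fun i _ => Finset.sum_congr rfl fun j _ =>
    Finset.sum_congr rfl fun k _ => by ring

end DotProduct

instance ENNReal.instHolderTripleFourFourTwo : ENNReal.HolderTriple 4 4 2 where
  inv_add_inv_eq_inv := by
    rw [← two_mul, show (4 : ENNReal) = 2 * 2 by norm_num, ENNReal.mul_inv (by simp) (by simp),
      ← mul_assoc, ENNReal.mul_inv_cancel (by simp) (by simp), one_mul]

section Moments

variable {Ω : Type*} [MeasurableSpace Ω] {μ : Measure Ω}

lemma memLp_of_integrable_norm_pow {E : Type*} [NormedAddCommGroup E] {f : Ω → E} {p : ℕ}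
    (hp : p ≠ 0) (hf : AEStronglyMeasurable f μ) (hint : Integrable (fun ω => ‖f ω‖ ^ p) μ) :
    MemLp f p μ := by
  rw [← integrable_norm_rpow_iff hf (by simpa) (by simp)]
  simpa using hint

lemma memLp_four_of_integrable_mul_mul_mul {f : Ω → ℝ} (hf : Integrable f μ)
    (hf4 : Integrable (fun ω => f ω * f ω * f ω * f ω) μ) : MemLp f 4 μ :=
  memLp_of_integrable_norm_pow four_ne_zero hf.aestronglyMeasurable
    (hf4.congr (.of_forall fun ω => by
      simp only [Real.norm_eq_abs, (by decide : Even 4).pow_abs]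
      ring))

lemma MeasureTheory.MemLp.integrable_mul_mul [IsFiniteMeasure μ] {f g h : Ω → ℝ}
    (hf : MemLp f 4 μ) (hg : MemLp g 4 μ) (hh : MemLp h 4 μ) :
    Integrable (fun ω => f ω * g ω * h ω) μ :=
  (hg.mul' (r := 2) hf).integrable_mul (hh.mono_exponent (p := 2) (by norm_num))

lemma integral_sq_const_add_add [IsProbabilityMeasure μ] (a : ℝ) {f g : Ω → ℝ}
    (hf : MemLp f 2 μ) (hg : MemLp g 2 μ) :
    ∫ ω, (a + f ω + g ω) ^ 2 ∂μ = a ^ 2 + 2 * a * ((∫ ω, f ω ∂μ) + ∫ ω, g ω ∂μ)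
      + ∫ ω, f ω ^ 2 ∂μ + 2 * ∫ ω, f ω * g ω ∂μ + ∫ ω, g ω ^ 2 ∂μ := by
  have hf1 := hf.integrable one_le_two
  have hg1 := hg.integrable one_le_two
  have hf2 := hf.integrable_sq
  have hg2 := hg.integrable_sq
  have hfg : Integrable (fun ω => f ω * g ω) μ := hf.integrable_mul hg
  have expand : ∀ ω, (a + f ω + g ω) ^ 2
      = a ^ 2 + 2 * a * f ω + 2 * a * g ω + f ω ^ 2 + 2 * (f ω * g ω) + g ω ^ 2 :=
    fun ω => by ring
  simp only [expand]
  repeat rw [integral_add (by fun_prop) (by fun_prop)]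
  simp only [integral_const, integral_const_mul, probReal_univ, one_smul]
  ring

variable {ι : Type*} [Fintype ι] {ε : Ω → ι → ℝ}

lemma memLp_dotProduct {p : ENNReal} (hε : ∀ i, MemLp (fun ω => ε ω i) p μ) (w : ι → ℝ) :
    MemLp (fun ω => w ⬝ᵥ ε ω) p μ :=
  memLp_finsetSum _ fun i _ => (hε i).const_mul (w i)

lemma integral_dotProduct (h1 : ∀ i, Integrable (fun ω => ε ω i) μ) (w : ι → ℝ) :
    ∫ ω, w ⬝ᵥ ε ω ∂μ = ∑ i, w i * ∫ ω, ε ω i ∂μ := by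
  simp (disch := fun_prop) only [dotProduct, integral_finsetSum, integral_const_mul]

lemma integral_dotProduct_mul_dotProduct (h2 : ∀ i j, Integrable (fun ω => ε ω i * ε ω j) μ)
    (u v : ι → ℝ) :
    ∫ ω, (u ⬝ᵥ ε ω) * (v ⬝ᵥ ε ω) ∂μ = ∑ i, ∑ j, u i * v j * ∫ ω, ε ω i * ε ω j ∂μ := by
  simp (disch := fun_prop) only [dotProduct_mul_dotProduct, integral_finsetSum, integral_const_mul]

lemma integrable_dotProduct_mul_dotProduct_mul_dotProduct
    (h3 : ∀ i j k, Integrable (fun ω => ε ω i * ε ω j * ε ω k) μ) (u v w : ι → ℝ) :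
    Integrable (fun ω => (u ⬝ᵥ ε ω) * (v ⬝ᵥ ε ω) * (w ⬝ᵥ ε ω)) μ := by
  simp only [dotProduct_mul_dotProduct_mul_dotProduct]
  fun_prop

lemma integral_dotProduct_mul_dotProduct_mul_dotProduct
    (h3 : ∀ i j k, Integrable (fun ω => ε ω i * ε ω j * ε ω k) μ) (u v w : ι → ℝ) :
    ∫ ω, (u ⬝ᵥ ε ω) * (v ⬝ᵥ ε ω) * (w ⬝ᵥ ε ω) ∂μ
      = ∑ i, ∑ j, ∑ k, u i * v j * w k * ∫ ω, ε ω i * ε ω j * ε ω k ∂μ := by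
  simp (disch := fun_prop) only [dotProduct_mul_dotProduct_mul_dotProduct, integral_finsetSum,
    integral_const_mul]

lemma memLp_sum_sq_mulVec {κ : Type*} [Fintype κ]
    (hε : ∀ i, MemLp (fun ω => ε ω i) 4 μ) (B : Matrix κ ι ℝ) :
    MemLp (fun ω => ∑ k, (B *ᵥ ε ω) k ^ 2) 2 μ :=
  memLp_finsetSum _ fun k _ => by
    have hk : MemLp (fun ω => (B *ᵥ ε ω) k) 4 μ := memLp_dotProduct hε (B k)
    simpa only [sq] using hk.mul' (r := 2) hk

lemma integral_dotProduct_sq [DecidableEq ι] {σ : ℝ}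
    (h2 : ∀ i j, Integrable (fun ω => ε ω i * ε ω j) μ)
    (hcov : ∀ i j, ∫ ω, ε ω i * ε ω j ∂μ = if i = j then σ ^ 2 else 0) (w : ι → ℝ) :
    ∫ ω, (w ⬝ᵥ ε ω) ^ 2 ∂μ = σ ^ 2 * ∑ i, w i ^ 2 := by
  simp only [sq (w ⬝ᵥ _), integral_dotProduct_mul_dotProduct h2, hcov, mul_ite, mul_zero,
    Finset.sum_ite_eq, Finset.mem_univ, if_true, Finset.mul_sum]
  exact Finset.sum_congr rfl fun i _ => by ring

lemma integral_dotProduct_mul_sum_sq_mulVec {κ : Type*} [Fintype κ]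
    (h3 : ∀ i j k, Integrable (fun ω => ε ω i * ε ω j * ε ω k) μ)
    (hodd3 : ∀ i j k, ∫ ω, ε ω i * ε ω j * ε ω k ∂μ = 0) (w : ι → ℝ) (B : Matrix κ ι ℝ) :
    ∫ ω, w ⬝ᵥ ε ω * ∑ k, (B *ᵥ ε ω) k ^ 2 ∂μ = 0 := by
  simp only [Finset.mul_sum, sq, ← mul_assoc, mulVec]
  rw [integral_finsetSum _ fun k _ => integrable_dotProduct_mul_dotProduct_mul_dotProduct h3 _ _ _]
  simp [integral_dotProduct_mul_dotProduct_mul_dotProduct h3, hodd3]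

end Moments

theorem stmt7_general {K M : ℕ} (A : Matrix (Fin K) (Fin M) ℝ) (σ : ℝ)
    {Ω : Type*} [MeasurableSpace Ω] (μ : Measure Ω) [IsProbabilityMeasure μ]
    (ε : Ω → Fin M → ℝ)
    (hmean : ∀ i, ∫ ω, ε ω i ∂μ = 0)
    (hcov : ∀ i j, ∫ ω, ε ω i * ε ω j ∂μ = if i = j then σ ^ 2 else 0)
    (hodd3 : ∀ i j k, ∫ ω, ε ω i * ε ω j * ε ω k ∂μ = 0)
    (hint1 : ∀ i, Integrable (fun ω => ε ω i) μ)
    (hint4 : ∀ i j k l, Integrable (fun ω => ε ω i * ε ω j * ε ω k * ε ω l) μ)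
    (y : Fin M → ℝ) (L : (Fin M → ℝ) → ℝ)
    (hL : ∀ x, L x = ∫ ω,
      ((∑ k, (A.mulVec (x + ε ω) k) ^ 2) - ∑ k, (A.mulVec y k) ^ 2) ^ 2 ∂μ)
    (x : Fin M → ℝ) :
    L x = (∑ k, (A.mulVec x k) ^ 2) ^ 2
        + 4 * σ ^ 2 * ∑ i, ((Aᵀ * A).mulVec x i) ^ 2
        + 2 * (∑ k, (A.mulVec x k) ^ 2)
            * ((∫ ω, ∑ k, (A.mulVec (ε ω) k) ^ 2 ∂μ) - ∑ k, (A.mulVec y k) ^ 2)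
        + L 0 := by
  have hε4 : ∀ i, MemLp (fun ω => ε ω i) 4 μ := fun i =>
    memLp_four_of_integrable_mul_mul_mul (hint1 i) (hint4 i i i i)
  have hε2 : ∀ i, MemLp (fun ω => ε ω i) 2 μ := fun i => (hε4 i).mono_exponent (by norm_num)
  have h2 : ∀ i j, Integrable (fun ω => ε ω i * ε ω j) μ := fun i j =>
    (hε2 i).integrable_mul (hε2 j)
  have h3 : ∀ i j k, Integrable (fun ω => ε ω i * ε ω j * ε ω k) μ := fun i j k =>
    (hε4 i).integrable_mul_mul (hε4 j) (hε4 k)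
  set c := ∑ k, (A *ᵥ y) k ^ 2
  set S := fun ω => ∑ k, (A *ᵥ ε ω) k ^ 2
  have hS : MemLp S 2 μ := memLp_sum_sq_mulVec hε4 A
  have hL_eq : ∀ z, L z = (∑ k, (A *ᵥ z) k ^ 2 - c) ^ 2
      + 2 * (∑ k, (A *ᵥ z) k ^ 2 - c) * ∫ ω, S ω ∂μ
      + 4 * σ ^ 2 * ∑ i, ((Aᵀ * A) *ᵥ z) i ^ 2 + ∫ ω, S ω ^ 2 ∂μ := by
    intro z
    have hlin := (memLp_dotProduct hε2 ((Aᵀ * A) *ᵥ z)).const_mul 2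
    have hodd : ∫ ω, (Aᵀ * A) *ᵥ z ⬝ᵥ ε ω * S ω ∂μ = 0 :=
      integral_dotProduct_mul_sum_sq_mulVec h3 hodd3 _ A
    calc L z = ∫ ω, (∑ k, (A *ᵥ z) k ^ 2 - c + 2 * (Aᵀ * A) *ᵥ z ⬝ᵥ ε ω + S ω) ^ 2 ∂μ := by
          rw [hL z]
          refine integral_congr_ae (.of_forall fun ω => ?_)
          simp only [sum_sq_mulVec_add, S]
          ring
      _ = _ := by
        rw [integral_sq_const_add_add _ hlin hS]
        simp only [mul_pow, mul_assoc, integral_const_mul, integral_dotProduct hint1, hmean,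
          integral_dotProduct_sq h2 hcov, hodd, mul_zero, Finset.sum_const_zero]
        ring
  rw [hL_eq x, hL_eq 0]
  simp only [mulVec_zero, Pi.zero_apply, zero_pow two_ne_zero, Finset.sum_const_zero]
  ring

theorem stmt7 {K M : ℕ} (A : Matrix (Fin K) (Fin M) ℝ) (σ : ℝ) (hσ : 0 < σ)
    {Ω : Type*} [MeasurableSpace Ω] (μ : Measure Ω) [IsProbabilityMeasure μ]
    (ε : Ω → Fin M → ℝ)
    (hmean : ∀ i, ∫ ω, ε ω i ∂μ = 0)
    (hcov : ∀ i j, ∫ ω, ε ω i * ε ω j ∂μ = if i = j then σ ^ 2 else 0)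
    (hodd3 : ∀ i j k, ∫ ω, ε ω i * ε ω j * ε ω k ∂μ = 0)
    (hint1 : ∀ i, Integrable (fun ω => ε ω i) μ)
    (hint2 : ∀ i j, Integrable (fun ω => ε ω i * ε ω j) μ)
    (hint3 : ∀ i j k, Integrable (fun ω => ε ω i * ε ω j * ε ω k) μ)
    (hint4 : ∀ i j k l, Integrable (fun ω => ε ω i * ε ω j * ε ω k * ε ω l) μ)
    (y : Fin M → ℝ) (L : (Fin M → ℝ) → ℝ)
    (hL : ∀ x, L x = ∫ ω,
      ((∑ k, (A.mulVec (x + ε ω) k) ^ 2) - ∑ k, (A.mulVec y k) ^ 2) ^ 2 ∂μ)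
    (x : Fin M → ℝ) :
    L x = (∑ k, (A.mulVec x k) ^ 2) ^ 2
        + 4 * σ ^ 2 * ∑ i, ((Aᵀ * A).mulVec x i) ^ 2
        + 2 * (∑ k, (A.mulVec x k) ^ 2)
            * ((∫ ω, ∑ k, (A.mulVec (ε ω) k) ^ 2 ∂μ) - ∑ k, (A.mulVec y k) ^ 2)
        + L 0 :=
  stmt7_general A σ μ ε hmean hcov hodd3 hint1 hint4 y L hL x
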